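/- arXiv:2506.06726 — 8 statements merged into one kernel-verified Lean document; each statement's English description precedes it below -/
import Mathlib

section
/- Let E, A be Banach spaces and Λ : E* → A a linear operator that is weak*-continuous on bounded sets. Then there exists a linear operator Γ : A* → E, weak*-continuous on bounded sets, such that ψ(Γφ) = φ(Λψ) for all ψ ∈ E* and φ ∈ A*. -/
/-!
The only candidate is `Γ φ = φ ∘ Λ`, a priori an element of `E**`; one has to show that it lies
in `E` and that `Γ` is wcbs.

By Banach–Alaoglu the image `K` of the unit ball under `Λ` is norm-compact, so `Λ` is bounded and
`φ ∘ Λ ∈ E**`. Weak*-continuity of `φ ∘ Λ` at `0` makes it `ε`-small on the unit ball of a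
finite-codimensional subspace `⋂_{x ∈ s} ker evₓ` of `E*`; by Hahn–Banach it is then within `ε` of
the span of the `evₓ`, hence of `E`, which is closed in `E**` because `E` is complete.
Finally `‖Γ φ - Γ φ₀‖ = sup_{a ∈ K} |(φ - φ₀) a|`, and on the unit ball of `A*`, which is
equicontinuous, weak*-convergence is uniform on the compact set `K` (Ascoli).
-/

open NormedSpace

/-- `Λ` is weak*-continuous on bounded sets. -/
def IsWcbs {E A : Type*} [NormedAddCommGroup E] [NormedSpace ℂ E]
    [TopologicalSpace A] (Λ : StrongDual ℂ E → A) : Prop :=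
  ContinuousOn (fun ψ : WeakDual ℂ E => Λ (WeakDual.toStrongDual ψ))
    {ψ : WeakDual ℂ E | ‖WeakDual.toStrongDual ψ‖ ≤ 1}

open Topology Metric

namespace WeakDual

section Neighbourhoods

variable {𝕜 E : Type*} [CommSemiring 𝕜] [TopologicalSpace 𝕜] [ContinuousAdd 𝕜]
  [ContinuousConstSMul 𝕜 𝕜] [AddCommMonoid E] [Module 𝕜 E] [TopologicalSpace E]

theorem exists_finset_forall_eq_zero_mem {U : Set (WeakDual 𝕜 E)} (hU : U ∈ 𝓝 0) :
    ∃ s : Finset E, ∀ ψ : WeakDual 𝕜 E, (∀ x ∈ s, ψ x = 0) → ψ ∈ U := by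
  have h_ind : IsInducing fun (ψ : WeakDual 𝕜 E) (x : E) => ψ x := ⟨rfl⟩
  obtain ⟨V, hV, hVU⟩ := h_ind.nhds_eq_comap 0 ▸ hU
  rw [nhds_pi, Filter.mem_pi] at hV
  obtain ⟨I, hI, t, ht, htV⟩ := hV
  refine ⟨hI.toFinset, fun ψ hψ => hVU <| htV fun x hx => ?_⟩
  convert mem_of_mem_nhds (ht x) using 1
  exact hψ x (hI.mem_toFinset.2 hx)

end Neighbourhoods

variable {𝕜 A : Type*} [RCLike 𝕜] [NormedAddCommGroup A] [NormedSpace 𝕜 A]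

theorem tendstoUniformly_unitBall_of_isCompact {K : Set A} (hK : IsCompact K)
    (φ₀ : {φ : WeakDual 𝕜 A | ‖toStrongDual φ‖ ≤ 1}) :
    TendstoUniformly (fun (φ : {φ : WeakDual 𝕜 A | ‖toStrongDual φ‖ ≤ 1}) (a : K) => φ.1 a)
      (fun a => φ₀.1 a) (𝓝 φ₀) := by
  have : CompactSpace K := isCompact_iff_compactSpace.1 hK
  have h_lip (φ : {φ : WeakDual 𝕜 A | ‖toStrongDual φ‖ ≤ 1}) :
      LipschitzWith 1 fun a : K => φ.1 a :=
    ((toStrongDual φ.1).lipschitz.weaken (show ‖toStrongDual φ.1‖₊ ≤ 1 from φ.2)).comp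
      (LipschitzWith.subtype_val K) |>.weaken (mul_one 1).le
  have h_equi := (LipschitzWith.uniformEquicontinuous _ 1 h_lip).equicontinuous
  refine UniformFun.tendsto_iff_tendstoUniformly.1 <| (h_equi.tendsto_uniformFun_iff_pi _ _).2 ?_
  exact (continuous_pi fun a : K => (eval_continuous a.1).comp continuous_subtype_val).tendsto φ₀

end WeakDual

section DoubleDual

variable {𝕜 X : Type*} [RCLike 𝕜] [NormedAddCommGroup X] [NormedSpace 𝕜 X]

theorem exists_norm_sub_sum_smul_le {ι : Type*} [Fintype ι] (g : ι → StrongDual 𝕜 X)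
    (f : StrongDual 𝕜 X) {ε : ℝ} (hε : 0 ≤ ε)
    (hf : ∀ x, ‖x‖ = 1 → (∀ i, g i x = 0) → ‖f x‖ ≤ ε) :
    ∃ c : ι → 𝕜, ‖f - ∑ i, c i • g i‖ ≤ ε := by
  let p : Subspace 𝕜 X := ⨅ i, LinearMap.ker (g i : X →ₗ[𝕜] 𝕜)
  have mem_p : ∀ x, x ∈ p ↔ ∀ i, g i x = 0 := by simp [p, Submodule.mem_iInf]
  obtain ⟨h, h_ext, h_norm⟩ := exists_extension_norm_eq p (f.comp p.subtypeL)
  have h_ker : p ≤ LinearMap.ker ((f - h : StrongDual 𝕜 X) : X →ₗ[𝕜] 𝕜) := fun x hx => by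
    simpa [sub_eq_zero] using (h_ext ⟨x, hx⟩).symm
  obtain ⟨c, hc⟩ :=
    (Submodule.mem_span_range_iff_exists_fun 𝕜).1 (mem_span_of_iInf_ker_le_ker h_ker)
  refine ⟨c, ?_⟩
  have : f - ∑ i, c i • g i = h := by
    ext x
    have hcx : ∑ i, c i * g i x = f x - h x := by simpa using congr($hc x)
    simp only [sub_apply, sum_apply, smul_apply, smul_eq_mul]
    linear_combination -hcx
  rw [this, h_norm]
  exact ContinuousLinearMap.opNorm_le_of_unit_norm hε fun x hx =>
    hf x (by simpa using hx) ((mem_p x).1 x.2)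

theorem mem_range_inclusionInDoubleDual_of_continuousWithinAt [CompleteSpace X]
    (f : StrongDual 𝕜 (StrongDual 𝕜 X))
    (hf : ContinuousWithinAt (fun ψ : WeakDual 𝕜 X => f (WeakDual.toStrongDual ψ))
      {ψ | ‖WeakDual.toStrongDual ψ‖ ≤ 1} 0) :
    f ∈ LinearMap.range (inclusionInDoubleDual 𝕜 X : X →ₗ[𝕜] StrongDual 𝕜 (StrongDual 𝕜 X)) := by
  have h_closed : IsClosed (Set.range (inclusionInDoubleDual 𝕜 X)) :=
    (inclusionInDoubleDualLi 𝕜).isometry.isUniformInducing.isComplete_range.isClosed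
  refine h_closed.closure_subset <|
    (Metric.mem_closure_iff (α := StrongDual 𝕜 (StrongDual 𝕜 X))).2 fun ε hε => ?_
  obtain ⟨U, hU, hUf⟩ := mem_nhdsWithin_iff_exists_mem_nhds_inter.1 <|
    hf.tendsto (ball_mem_nhds _ (half_pos hε))
  obtain ⟨s, hs⟩ := WeakDual.exists_finset_forall_eq_zero_mem hU
  obtain ⟨c, hc⟩ := exists_norm_sub_sum_smul_le (fun x : s => inclusionInDoubleDual 𝕜 X x) f
    (half_pos hε).le fun ψ hψ hψs => by
      have hψU := hUf ⟨hs (WeakDual.toStrongDual.symm ψ) fun x hx => hψs ⟨x, hx⟩, hψ.le⟩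
      exact le_of_lt (by simpa using hψU)
  refine ⟨_, ⟨∑ x : s, c x • (x : X), rfl⟩, ?_⟩
  rw [dist_eq_norm (E := StrongDual 𝕜 (StrongDual 𝕜 X)), map_sum]
  simp only [map_smul]
  linarith

end DoubleDual

namespace IsWcbs

variable {E : Type*} [NormedAddCommGroup E] [NormedSpace ℂ E]

theorem isCompact_image_closedBall {A : Type*} [TopologicalSpace A] {Λ : StrongDual ℂ E → A}
    (h : IsWcbs Λ) : IsCompact (Λ '' closedBall 0 1) := by
  have h_ball : {ψ : WeakDual ℂ E | ‖WeakDual.toStrongDual ψ‖ ≤ 1} =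
      WeakDual.toStrongDual ⁻¹' closedBall 0 1 := by
    ext; simp
  have := (WeakDual.isCompact_closedBall (𝕜 := ℂ) (E := E) 0 1).image_of_continuousOn
    (ContinuousOn.mono h h_ball.ge)
  rwa [← Set.image_image Λ, Set.image_preimage_eq _ WeakDual.toStrongDual.surjective] at this

variable {A : Type*} [NormedAddCommGroup A] [NormedSpace ℂ A] {Λ : StrongDual ℂ E →ₗ[ℂ] A}

theorem exists_bound (h : IsWcbs ⇑Λ) : ∃ C, ∀ ψ, ‖Λ ψ‖ ≤ C * ‖ψ‖ := by
  obtain ⟨C, hC⟩ := h.isCompact_image_closedBall.isBounded.exists_norm_le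
  exact Λ.bound_of_ball_bound one_pos C fun ψ hψ =>
    hC _ (Set.mem_image_of_mem _ (ball_subset_closedBall hψ))

noncomputable def toContinuousLinearMap (h : IsWcbs ⇑Λ) : StrongDual ℂ E →L[ℂ] A :=
  Λ.mkContinuousOfExistsBound h.exists_bound

variable [CompleteSpace E]

theorem comp_mem_range (h : IsWcbs ⇑Λ) (φ : StrongDual ℂ A) :
    φ ∘L h.toContinuousLinearMap ∈
      LinearMap.range (inclusionInDoubleDual ℂ E : E →ₗ[ℂ] StrongDual ℂ (StrongDual ℂ E)) :=
  mem_range_inclusionInDoubleDual_of_continuousWithinAt _ <|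
    (φ.continuous.comp_continuousOn h).continuousWithinAt (by simp)

noncomputable def dual (h : IsWcbs ⇑Λ) : StrongDual ℂ A →ₗ[ℂ] E :=
  (LinearEquiv.ofInjective _ (inclusionInDoubleDualLi ℂ (E := E)).injective).symm.toLinearMap ∘ₗ
    LinearMap.codRestrict _
      ((ContinuousLinearMap.compL ℂ _ A ℂ).flip h.toContinuousLinearMap).toLinearMap
      h.comp_mem_range

theorem apply_dual (h : IsWcbs ⇑Λ) (φ : StrongDual ℂ A) (ψ : StrongDual ℂ E) :
    ψ (h.dual φ) = φ (Λ ψ) :=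
  congr($(LinearEquiv.ofInjective_symm_apply _ (h := (inclusionInDoubleDualLi ℂ).injective)
    ⟨_, h.comp_mem_range φ⟩) ψ)

theorem norm_dual_le (h : IsWcbs ⇑Λ) (φ : StrongDual ℂ A) {ε : ℝ} (hε : 0 ≤ ε)
    (hφ : ∀ ψ : StrongDual ℂ E, ‖ψ‖ = 1 → ‖φ (Λ ψ)‖ ≤ ε) : ‖h.dual φ‖ ≤ ε :=
  norm_le_dual_bound ℂ _ hε fun ψ => by
    rw [h.apply_dual]
    exact (φ ∘L h.toContinuousLinearMap).le_of_opNorm_le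
      (ContinuousLinearMap.opNorm_le_of_unit_norm hε hφ) ψ

theorem isWcbs_dual (h : IsWcbs ⇑Λ) : IsWcbs ⇑h.dual := by
  rw [IsWcbs, continuousOn_iff_continuous_domRestrict, continuous_iff_continuousAt]
  intro φ₀
  refine Metric.tendsto_nhds.2 fun ε hε => ?_
  filter_upwards [Metric.tendstoUniformly_iff.1
    (WeakDual.tendstoUniformly_unitBall_of_isCompact h.isCompact_image_closedBall φ₀)
    (ε / 2) (half_pos hε)] with φ hφ
  rw [Set.domRestrict_apply, Set.domRestrict_apply, dist_eq_norm, ← map_sub]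
  refine (h.norm_dual_le _ (half_pos hε).le fun ψ hψ => ?_).trans_lt (half_lt_self hε)
  have hΛψ := hφ ⟨Λ ψ, ψ, by simp [hψ], rfl⟩
  rw [dist_comm, dist_eq_norm] at hΛψ
  exact hΛψ.le

end IsWcbs

theorem exists_dual_mapping_of_wcbs_general {E A : Type*}
    [NormedAddCommGroup E] [NormedSpace ℂ E] [CompleteSpace E]
    [NormedAddCommGroup A] [NormedSpace ℂ A]
    (Λ : StrongDual ℂ E →ₗ[ℂ] A) (h : IsWcbs ⇑Λ) :
    ∃ Γ : StrongDual ℂ A →ₗ[ℂ] E, IsWcbs ⇑Γ ∧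
      ∀ (ψ : StrongDual ℂ E) (φ : StrongDual ℂ A), ψ (Γ φ) = φ (Λ ψ) :=
  ⟨h.dual, h.isWcbs_dual, fun ψ φ => h.apply_dual φ ψ⟩

/-- Every wcbs linear operator `Λ : E* → A` admits a wcbs dual mapping `Γ : A* → E`
with `ψ(Γφ) = φ(Λψ)`. -/
theorem exists_dual_mapping_of_wcbs {E A : Type*}
    [NormedAddCommGroup E] [NormedSpace ℂ E] [CompleteSpace E]
    [NormedAddCommGroup A] [NormedSpace ℂ A] [CompleteSpace A]
    (Λ : StrongDual ℂ E →ₗ[ℂ] A) (h : IsWcbs ⇑Λ) :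
    ∃ Γ : StrongDual ℂ A →ₗ[ℂ] E, IsWcbs ⇑Γ ∧
      ∀ (ψ : StrongDual ℂ E) (φ : StrongDual ℂ A), ψ (Γ φ) = φ (Λ ψ) :=
  exists_dual_mapping_of_wcbs_general Λ h
end

section
/- For Banach spaces E and A, the space W(E*, A) of linear operators E* → A that are weak*-continuous on bounded sets is a closed subspace of the space K(E*, A) of compact operators, with respect to the operator norm. -/
/-!
By Banach–Alaoglu the unit ball of `E*` is weak*-compact, so a wcbs operator maps it onto a
compact set, i.e. it is compact. Continuity on the ball is preserved by sums and scalar multiples,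
and by limits in operator norm, since norm convergence is uniform convergence on the unit ball.
-/

open NormedSpace

open Metric Filter Topology WeakDual

theorem ContinuousLinearMap.tendstoUniformlyOn_nhds_of_isVonNBounded {𝕜 E F : Type*}
    [NontriviallyNormedField 𝕜] [AddCommGroup E] [Module 𝕜 E] [TopologicalSpace E]
    [AddCommGroup F] [Module 𝕜 F] [UniformSpace F] [IsUniformAddGroup F]
    {s : Set E} (hs : Bornology.IsVonNBounded 𝕜 s) (T : E →L[𝕜] F) :
    TendstoUniformlyOn (fun S : E →L[𝕜] F => ⇑S) T (𝓝 T) s :=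
  (UniformConvergenceCLM.tendsto_iff_tendstoUniformlyOn (σ := RingHom.id 𝕜) (F := F)
    {s : Set E | Bornology.IsVonNBounded 𝕜 s} (a := id) (a₀ := T)).1 tendsto_id s hs

theorem WeakDual.toStrongDual_preimage_closedBall_zero {𝕜 E : Type*} [NontriviallyNormedField 𝕜]
    [SeminormedAddCommGroup E] [NormedSpace 𝕜 E] (r : ℝ) :
    toStrongDual ⁻¹' closedBall (0 : StrongDual 𝕜 E) r = {ψ | ‖toStrongDual ψ‖ ≤ r} := by
  ext
  simp

section IsWcbs

variable {E A : Type*} [NormedAddCommGroup E] [NormedSpace ℂ E] [TopologicalSpace A]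

theorem IsWcbs.isCompactOperator {Λ : StrongDual ℂ E → A} (h : IsWcbs Λ) :
    IsCompactOperator Λ := by
  have hball := WeakDual.isCompact_closedBall (0 : StrongDual ℂ E) 1
  rw [toStrongDual_preimage_closedBall_zero] at hball
  exact ⟨_, hball.image_of_continuousOn h, mem_of_superset (closedBall_mem_nhds 0 one_pos)
    fun x hx => ⟨toStrongDual.symm x, by simpa using hx, rfl⟩⟩

theorem IsWcbs.add [Add A] [ContinuousAdd A] {Λ₁ Λ₂ : StrongDual ℂ E → A}
    (h₁ : IsWcbs Λ₁) (h₂ : IsWcbs Λ₂) : IsWcbs (Λ₁ + Λ₂) :=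
  ContinuousOn.add h₁ h₂

theorem IsWcbs.const_smul {M : Type*} [SMul M A] [ContinuousConstSMul M A]
    {Λ : StrongDual ℂ E → A} (h : IsWcbs Λ) (c : M) : IsWcbs (c • Λ) :=
  ContinuousOn.const_smul h c

end IsWcbs

theorem isClosed_setOf_isWcbs {E A : Type*} [NormedAddCommGroup E] [NormedSpace ℂ E]
    [AddCommGroup A] [Module ℂ A] [UniformSpace A] [IsUniformAddGroup A] :
    IsClosed {Λ : StrongDual ℂ E →L[ℂ] A | IsWcbs ⇑Λ} := by
  refine isClosed_iff_frequently.2 fun Λ hΛ => ?_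
  have hunif := (ContinuousLinearMap.tendstoUniformlyOn_nhds_of_isVonNBounded
    (NormedSpace.isVonNBounded_closedBall ℂ (StrongDual ℂ E) 1) Λ).comp toStrongDual
  rw [toStrongDual_preimage_closedBall_zero] at hunif
  exact hunif.continuousOn hΛ

theorem wcbs_closed_subspace_of_compact_general {E A : Type*}
    [NormedAddCommGroup E] [NormedSpace ℂ E]
    [NormedAddCommGroup A] [NormedSpace ℂ A] :
    (∀ Λ : StrongDual ℂ E →L[ℂ] A, IsWcbs ⇑Λ → IsCompactOperator ⇑Λ) ∧
    (∀ Λ₁ Λ₂ : StrongDual ℂ E →L[ℂ] A, IsWcbs ⇑Λ₁ → IsWcbs ⇑Λ₂ → IsWcbs ⇑(Λ₁ + Λ₂)) ∧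
    (∀ (c : ℂ) (Λ : StrongDual ℂ E →L[ℂ] A), IsWcbs ⇑Λ → IsWcbs ⇑(c • Λ)) ∧
    IsClosed {Λ : StrongDual ℂ E →L[ℂ] A | IsWcbs ⇑Λ} :=
  ⟨fun _ h => h.isCompactOperator, fun _ _ h₁ h₂ => h₁.add h₂,
    fun c _ h => h.const_smul c, isClosed_setOf_isWcbs⟩

/-- `W(E*, A)` is a closed subspace of the compact operators `K(E*, A)`:
wcbs operators are compact, the wcbs operators form a subspace, and this subspace is
closed in the operator norm. -/
theorem wcbs_closed_subspace_of_compact {E A : Type*}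
    [NormedAddCommGroup E] [NormedSpace ℂ E] [CompleteSpace E]
    [NormedAddCommGroup A] [NormedSpace ℂ A] [CompleteSpace A] :
    (∀ Λ : StrongDual ℂ E →L[ℂ] A, IsWcbs ⇑Λ → IsCompactOperator ⇑Λ) ∧
    (∀ Λ₁ Λ₂ : StrongDual ℂ E →L[ℂ] A, IsWcbs ⇑Λ₁ → IsWcbs ⇑Λ₂ → IsWcbs ⇑(Λ₁ + Λ₂)) ∧
    (∀ (c : ℂ) (Λ : StrongDual ℂ E →L[ℂ] A), IsWcbs ⇑Λ → IsWcbs ⇑(c • Λ)) ∧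
    IsClosed {Λ : StrongDual ℂ E →L[ℂ] A | IsWcbs ⇑Λ} :=
  wcbs_closed_subspace_of_compact_general
end

section
/- Let Λ : E* → A be a bounded operator admitting a dual mapping, i.e., a bounded operator Γ : A* → E with ψ(Γφ) = φ(Λψ) for all ψ ∈ E*, φ ∈ A*. If Λ is compact, then Λ is weak*-continuous on bounded sets. -/
open NormedSpace

/-- A compact operator `Λ : E* → A` admitting a dual mapping is weak*-continuous on
bounded sets. -/
theorem wcbs_of_compact_of_dual_mapping {E A : Type*}
    [NormedAddCommGroup E] [NormedSpace ℂ E] [CompleteSpace E]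
    [NormedAddCommGroup A] [NormedSpace ℂ A] [CompleteSpace A]
    (Λ : StrongDual ℂ E →L[ℂ] A) (Γ : StrongDual ℂ A →L[ℂ] E)
    (hdual : ∀ (ψ : StrongDual ℂ E) (φ : StrongDual ℂ A), ψ (Γ φ) = φ (Λ ψ))
    (hcompact : IsCompactOperator ⇑Λ) : IsWcbs ⇑Λ := by
  classical
  -- The weak topology on `A` is Hausdorff.
  haveI : T2Space (WeakSpace ℂ A) := by
    refine (WeakBilin.isEmbedding ?_).t2Space
    intro x y hxy
    have h : ∀ φ : StrongDual ℂ A, φ (x - y) = 0 := by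
      intro φ
      have h1 : (topDualPairing ℂ A).flip x φ = (topDualPairing ℂ A).flip y φ := by rw [hxy]
      simp only [LinearMap.flip_apply, topDualPairing_apply] at h1
      simp [map_sub, h1]
    exact sub_eq_zero.mp (eq_zero_of_forall_dual_eq_zero ℂ h)
  -- The closed unit ball `B` of the weak* dual is compact (Banach-Alaoglu).
  set B : Set (WeakDual ℂ E) := {ψ : WeakDual ℂ E | ‖WeakDual.toStrongDual ψ‖ ≤ 1} with hBdef
  have hB : IsCompact B := by
    have := WeakDual.isCompact_closedBall (𝕜 := ℂ) (E := E) 0 1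
    convert this using 1
    ext ψ
    simp [hBdef, Metric.mem_closedBall, dist_zero_right]
  -- a compact set containing the image of the unit ball
  obtain ⟨K, hKc, hKsub⟩ :=
    hcompact.image_subset_compact_of_bounded (f := (Λ : StrongDual ℂ E →ₗ[ℂ] A))
      (S := Metric.closedBall 0 1) Metric.isBounded_closedBall
  have hmem : ∀ ψ ∈ B, Λ (WeakDual.toStrongDual ψ) ∈ K := fun ψ hψ =>
    hKsub ⟨WeakDual.toStrongDual ψ, by simpa [Metric.mem_closedBall, dist_zero_right] using (show ‖WeakDual.toStrongDual ψ‖ ≤ 1 from hψ), rfl⟩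
  -- `Λ` is weak*-to-weak continuous (globally)
  have hg : Continuous fun ψ : WeakDual ℂ E =>
      toWeakSpaceCLM ℂ A (Λ (WeakDual.toStrongDual ψ)) := by
    refine WeakBilin.continuous_of_continuous_eval _ fun φ => ?_
    have key : (fun ψ : WeakDual ℂ E =>
        (topDualPairing ℂ A).flip (toWeakSpaceCLM ℂ A (Λ (WeakDual.toStrongDual ψ))) φ)
        = fun ψ : WeakDual ℂ E => topDualPairing ℂ E ψ (Γ φ) := by
      ext ψ
      exact (hdual (WeakDual.toStrongDual ψ) φ).symm
    exact key ▸ WeakBilin.eval_continuous _ (Γ φ)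
  -- identity between `K` with the norm topology and its image in the weak topology
  haveI : CompactSpace K := isCompact_iff_compactSpace.mp hKc
  set K' : Set (WeakSpace ℂ A) := toWeakSpaceCLM ℂ A '' K with hK'def
  let e : K ≃ K' := Equiv.Set.image _ K (toWeakSpaceCLM_bijective (𝕜 := ℂ) (E := A)).injective
  have he : Continuous e :=
    Continuous.subtype_mk ((toWeakSpaceCLM ℂ A).continuous.comp continuous_subtype_val) _
  let homeo : K ≃ₜ K' := he.homeoOfEquivCompactToT2 (f := e)
  -- the map from `B` to `K'`
  rw [IsWcbs, continuousOn_iff_continuous_restrict]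
  have hrestr : Continuous fun ψ : B =>
      (⟨toWeakSpaceCLM ℂ A (Λ (WeakDual.toStrongDual ψ.1)),
        ⟨Λ (WeakDual.toStrongDual ψ.1), hmem ψ.1 ψ.2, rfl⟩⟩ : K') :=
    Continuous.subtype_mk (hg.comp continuous_subtype_val) _
  have hfinal : Continuous fun ψ : B => (homeo.symm
      ⟨toWeakSpaceCLM ℂ A (Λ (WeakDual.toStrongDual ψ.1)),
        ⟨Λ (WeakDual.toStrongDual ψ.1), hmem ψ.1 ψ.2, rfl⟩⟩ : A) :=
    continuous_subtype_val.comp (homeo.symm.continuous.comp hrestr)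
  convert hfinal using 2 with ψ
  have : homeo.symm ⟨toWeakSpaceCLM ℂ A (Λ (WeakDual.toStrongDual ψ.1)),
      ⟨Λ (WeakDual.toStrongDual ψ.1), hmem ψ.1 ψ.2, rfl⟩⟩
      = ⟨Λ (WeakDual.toStrongDual ψ.1), hmem ψ.1 ψ.2⟩ := by
    exact homeo.toEquiv.symm_apply_eq.mpr rfl
  rw [this]
  rfl
end

section
/- A Banach space E is reflexive if and only if every bounded operator Λ : E* → A, for every Banach space A, admits a dual mapping Γ : A* → E satisfying ψ(Γφ) = φ(Λψ) for all ψ ∈ E*, φ ∈ A*. Moreover this is equivalent to the same condition restricted to finite-dimensional A. -/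
/-!
If the canonical embedding `J : E → E**` is onto, it is an isometric isomorphism, and
`Γ := J⁻¹ ∘ Λ*`, where `Λ* φ = φ ∘ Λ`, is a dual mapping of `Λ`. Conversely, with `A = ℂ` an
operator `E* → ℂ` is just an element `x` of `E**`, and any dual mapping `Γ` of it gives
`J (Γ 1) = x`.
-/

open NormedSpace

section DualMapping

variable {𝕜 E A : Type*} [NontriviallyNormedField 𝕜]
  [NormedAddCommGroup E] [NormedSpace 𝕜 E] [NormedAddCommGroup A] [NormedSpace 𝕜 A]

variable (𝕜) in
def IsDualMapping (Λ : StrongDual 𝕜 E →L[𝕜] A) (Γ : StrongDual 𝕜 A →L[𝕜] E) : Prop :=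
  ∀ (ψ : StrongDual 𝕜 E) (φ : StrongDual 𝕜 A), ψ (Γ φ) = φ (Λ ψ)

theorem inclusionInDoubleDual_apply_id_of_isDualMapping {x : StrongDual 𝕜 (StrongDual 𝕜 E)}
    {Γ : StrongDual 𝕜 𝕜 →L[𝕜] E} (h : IsDualMapping 𝕜 x Γ) :
    inclusionInDoubleDual 𝕜 E (Γ (.id 𝕜 𝕜)) = x := by
  ext ψ
  simpa using h ψ (.id 𝕜 𝕜)

theorem surjective_inclusionInDoubleDual_of_forall_isDualMapping
    (h : ∀ x : StrongDual 𝕜 (StrongDual 𝕜 E), ∃ Γ : StrongDual 𝕜 𝕜 →L[𝕜] E, IsDualMapping 𝕜 x Γ) :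
    Function.Surjective (inclusionInDoubleDual 𝕜 E) := fun x =>
  let ⟨_, hΓ⟩ := h x
  ⟨_, inclusionInDoubleDual_apply_id_of_isDualMapping hΓ⟩

end DualMapping

theorem exists_isDualMapping_of_surjective_inclusionInDoubleDual {𝕜 E A : Type*} [RCLike 𝕜]
    [NormedAddCommGroup E] [NormedSpace 𝕜 E] [NormedAddCommGroup A] [NormedSpace 𝕜 A]
    (hE : Function.Surjective (inclusionInDoubleDual 𝕜 E)) (Λ : StrongDual 𝕜 E →L[𝕜] A) :
    ∃ Γ : StrongDual 𝕜 A →L[𝕜] E, IsDualMapping 𝕜 Λ Γ := by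
  let J := LinearIsometryEquiv.ofSurjective (inclusionInDoubleDualLi 𝕜 (E := E)) hE
  refine ⟨J.symm.toContinuousLinearEquiv.toContinuousLinearMap ∘L
    (ContinuousLinearMap.compL 𝕜 (StrongDual 𝕜 E) A 𝕜).flip Λ, fun ψ φ => ?_⟩
  have hJ : inclusionInDoubleDual 𝕜 E (J.symm (φ ∘L Λ)) = φ ∘L Λ := J.apply_symm_apply _
  exact congrArg (· ψ) hJ

theorem reflexive_iff_every_operator_admits_dual_mapping_general
    (E : Type) [NormedAddCommGroup E] [NormedSpace ℂ E] :
    (Function.Surjective (NormedSpace.inclusionInDoubleDual ℂ E) ↔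
      ∀ (A : Type) (_ : NormedAddCommGroup A), ∀ (_ : @NormedSpace ℂ A _ _)
        (_ : CompleteSpace A), ∀ Λ : StrongDual ℂ E →L[ℂ] A,
        ∃ Γ : StrongDual ℂ A →L[ℂ] E, ∀ (ψ : StrongDual ℂ E) (φ : StrongDual ℂ A), ψ (Γ φ) = φ (Λ ψ)) ∧
    (Function.Surjective (NormedSpace.inclusionInDoubleDual ℂ E) ↔
      ∀ (A : Type) (_ : NormedAddCommGroup A), ∀ (_ : @NormedSpace ℂ A _ _)
        (_ : FiniteDimensional ℂ A), ∀ Λ : StrongDual ℂ E →L[ℂ] A,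
        ∃ Γ : StrongDual ℂ A →L[ℂ] E, ∀ (ψ : StrongDual ℂ E) (φ : StrongDual ℂ A), ψ (Γ φ) = φ (Λ ψ)) :=
  ⟨⟨fun hE _ _ _ _ => exists_isDualMapping_of_surjective_inclusionInDoubleDual hE,
      fun h => surjective_inclusionInDoubleDual_of_forall_isDualMapping (h ℂ _ _ inferInstance)⟩,
    ⟨fun hE _ _ _ _ => exists_isDualMapping_of_surjective_inclusionInDoubleDual hE,
      fun h => surjective_inclusionInDoubleDual_of_forall_isDualMapping (h ℂ _ _ inferInstance)⟩⟩

/-- A Banach space `E` is reflexive iff every bounded operator `Λ : E* → A`, for every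
Banach space `A`, admits a dual mapping `Γ : A* → E` with `ψ(Γφ) = φ(Λψ)`; moreover
this is equivalent to the same condition restricted to finite-dimensional `A`. -/
theorem reflexive_iff_every_operator_admits_dual_mapping
    (E : Type) [NormedAddCommGroup E] [NormedSpace ℂ E] [CompleteSpace E] :
    (Function.Surjective (NormedSpace.inclusionInDoubleDual ℂ E) ↔
      ∀ (A : Type) (_ : NormedAddCommGroup A), ∀ (_ : @NormedSpace ℂ A _ _)
        (_ : CompleteSpace A), ∀ Λ : StrongDual ℂ E →L[ℂ] A,
        ∃ Γ : StrongDual ℂ A →L[ℂ] E, ∀ (ψ : StrongDual ℂ E) (φ : StrongDual ℂ A), ψ (Γ φ) = φ (Λ ψ)) ∧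
    (Function.Surjective (NormedSpace.inclusionInDoubleDual ℂ E) ↔
      ∀ (A : Type) (_ : NormedAddCommGroup A), ∀ (_ : @NormedSpace ℂ A _ _)
        (_ : FiniteDimensional ℂ A), ∀ Λ : StrongDual ℂ E →L[ℂ] A,
        ∃ Γ : StrongDual ℂ A →L[ℂ] E, ∀ (ψ : StrongDual ℂ E) (φ : StrongDual ℂ A), ψ (Γ φ) = φ (Λ ψ)) :=
  reflexive_iff_every_operator_admits_dual_mapping_general E
end

section
/- Let A = ℓ² and a_i = e_i/√i, where (e_i) is the standard unit vector basis. Then ∑ ‖a_i‖² = ∞, yet the set {(⟨a_i, β⟩)_{i} : β ∈ ℓ², ‖β‖ ≤ 1} is totally bounded in ℓ². -/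
/-!
Since `⟪aᵢ, β⟫ = βᵢ / √(i+1)`, every point of the set has coordinates bounded by `1`, and its
tail beyond `N` has norm at most `‖β‖ / √(N+1) ≤ 1 / √(N+1)`. A subset of `ℓ^p` with bounded
coordinates and uniformly small tails is totally bounded, because truncation at `N` maps it into
a compact subset of a finite-dimensional space. On the other hand `‖aᵢ‖² = 1 / (i+1)` is the
harmonic series.
-/

open scoped ENNReal ComplexInnerProductSpace

theorem Metric.totallyBounded_of_forall_exists_totallyBounded_near {α : Type*}
    [PseudoMetricSpace α] {s : Set α}
    (h : ∀ ε > 0, ∃ t : Set α, TotallyBounded t ∧ ∀ x ∈ s, ∃ y ∈ t, dist x y < ε) :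
    TotallyBounded s := by
  refine Metric.totallyBounded_iff.2 fun ε hε => ?_
  obtain ⟨t, ht, hst⟩ := h (ε / 2) (half_pos hε)
  obtain ⟨u, hu, htu⟩ := Metric.totallyBounded_iff.1 ht (ε / 2) (half_pos hε)
  refine ⟨u, hu, fun x hx => ?_⟩
  obtain ⟨y, hy, hxy⟩ := hst x hx
  obtain ⟨z, hz, hyz⟩ := Set.mem_iUnion₂.1 (htu hy)
  refine Set.mem_iUnion₂.2 ⟨z, hz, ?_⟩
  rw [Metric.mem_ball] at hyz ⊢
  linarith [dist_triangle x y z]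

namespace lp

variable {ι : Type*} [DecidableEq ι] {E : ι → Type*} [∀ i, NormedAddCommGroup (E i)]
  {p : ℝ≥0∞}

theorem sub_sum_single_apply (x : lp E p) (F : Finset ι) (j : ι) :
    (x - ∑ i ∈ F, lp.single p i (x i)) j = if j ∈ F then 0 else x j := by
  simp only [coeFn_sub, coeFn_sum, lp.coeFn_single, Pi.sub_apply, Finset.sum_apply,
    Finset.sum_pi_single]
  split_ifs <;> simp

theorem norm_sub_sum_single_le {G : ι → Type*} [∀ i, NormedAddCommGroup (G i)] (hp : p ≠ 0)
    (x : lp E p) {y : lp G p} (F : Finset ι) (h : ∀ i ∉ F, ‖x i‖ ≤ ‖y i‖) :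
    ‖x - ∑ i ∈ F, lp.single p i (x i)‖ ≤ ‖y‖ :=
  lp.norm_mono hp fun i => by
    rw [sub_sum_single_apply]
    split_ifs with hi
    · simp
    · exact h i hi

variable [Fact (1 ≤ p)]

theorem totallyBounded_image_sum_single [∀ i, ProperSpace (E i)] {s : Set (lp E p)}
    (hs : ∀ i, Bornology.IsBounded ((fun x : lp E p => x i) '' s)) (F : Finset ι) :
    TotallyBounded ((fun x : lp E p => ∑ i ∈ F, lp.single p i (x i)) '' s) := by
  let L : ((i : F) → E i) → lp E p := fun v => ∑ i : F, lp.single p i (v i)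
  have hL : Continuous L :=
    continuous_finsetSum _ fun i _ => (isometry_single (E := E) i.1).continuous.comp
      (continuous_apply i)
  have hK : IsCompact (Set.univ.pi fun i : F => closure ((fun x : lp E p => x i) '' s)) :=
    isCompact_univ_pi fun i => (hs i).isCompact_closure
  refine ((hK.image hL).totallyBounded).subset ?_
  rintro _ ⟨x, hx, rfl⟩
  refine ⟨fun i => x i, fun i _ => subset_closure ⟨x, hx, rfl⟩, ?_⟩
  exact Finset.sum_coe_sort F fun i => lp.single p i (x i)

theorem totallyBounded_of_norm_sub_sum_single_lt [∀ i, ProperSpace (E i)] {s : Set (lp E p)}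
    (hs : ∀ i, Bornology.IsBounded ((fun x : lp E p => x i) '' s))
    (htail : ∀ ε > 0, ∃ F : Finset ι, ∀ x ∈ s, ‖x - ∑ i ∈ F, lp.single p i (x i)‖ < ε) :
    TotallyBounded s := by
  refine Metric.totallyBounded_of_forall_exists_totallyBounded_near fun ε hε => ?_
  obtain ⟨F, hF⟩ := htail ε hε
  exact ⟨_, totallyBounded_image_sum_single hs F, fun x hx =>
    ⟨_, ⟨x, hx, rfl⟩, by rw [dist_eq_norm]; exact hF x hx⟩⟩

end lp

section
variable {ι : Type*} [DecidableEq ι]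

theorem lp.inner_ofReal_smul_single_one (c : ℝ) (i : ι) (β : lp (fun _ : ι => ℂ) 2) :
    ⟪(c : ℂ) • lp.single 2 i 1, β⟫ = c * β i := by
  rw [inner_smul_left, lp.inner_single_left, Complex.conj_ofReal]
  simp

theorem lp.norm_ofReal_smul_single_one (c : ℝ) (i : ι) :
    ‖(c : ℂ) • lp.single (E := fun _ : ι => ℂ) 2 i 1‖ = |c| := by
  rw [norm_smul, lp.norm_single (by norm_num), norm_one, mul_one, Complex.norm_real,
    Real.norm_eq_abs]
end

/-- For `aᵢ = eᵢ/√i` in `ℓ²`, the series `∑ ‖aᵢ‖²` diverges, yet the set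
`{(⟨aᵢ, β⟩)ᵢ : β ∈ ℓ², ‖β‖ ≤ 1}` is totally bounded in `ℓ²`. -/
theorem example_lp_ne_lpc (a : ℕ → lp (fun _ : ℕ => ℂ) 2)
    (ha : ∀ i, a i = ((1 / Real.sqrt (i + 1) : ℝ) : ℂ) • lp.single 2 i 1) :
    ¬ Summable (fun i => ‖a i‖ ^ (2 : ℝ)) ∧
      TotallyBounded {x : lp (fun _ : ℕ => ℂ) 2 |
        ∃ β : lp (fun _ : ℕ => ℂ) 2, ‖β‖ ≤ 1 ∧ ∀ i, x i = ⟪a i, β⟫} := by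
  have hcoord (β : lp (fun _ : ℕ => ℂ) 2) (i : ℕ) :
      ‖⟪a i, β⟫‖ = ‖β i‖ / Real.sqrt (i + 1) := by
    rw [ha, lp.inner_ofReal_smul_single_one, norm_mul, Complex.norm_real, Real.norm_of_nonneg
      (by positivity), one_div_mul_eq_div]
  constructor
  · have hnorm_sq : (fun i => ‖a i‖ ^ (2 : ℝ)) = fun i : ℕ => 1 / ((i + 1 : ℕ) : ℝ) := by
      funext i
      rw [ha, lp.norm_ofReal_smul_single_one, Real.rpow_two, sq_abs, div_pow, one_pow,
        Real.sq_sqrt (by positivity)]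
      push_cast
      rfl
    rw [hnorm_sq, summable_nat_add_iff 1 (f := fun n : ℕ => 1 / (n : ℝ))]
    exact Real.not_summable_one_div_natCast
  · refine lp.totallyBounded_of_norm_sub_sum_single_lt (fun i => ?_) fun ε hε => ?_
    · refine isBounded_iff_forall_norm_le.2 ⟨1, ?_⟩
      rintro _ ⟨x, ⟨β, hβ, hx⟩, rfl⟩
      calc ‖x i‖ = ‖β i‖ / Real.sqrt (i + 1) := by rw [hx, hcoord]
        _ ≤ ‖β i‖ := div_le_self (norm_nonneg _) (Real.one_le_sqrt.2 (by simp))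
        _ ≤ 1 := (lp.norm_apply_le_norm two_ne_zero β i).trans hβ
    obtain ⟨N, hN⟩ := exists_nat_gt (1 / ε ^ 2)
    have hεN : 1 / Real.sqrt (N + 1) < ε := by
      refine (one_div_lt (by positivity) hε).2 ((Real.lt_sqrt (by positivity)).2 ?_)
      rw [div_pow, one_pow]
      linarith
    refine ⟨Finset.range N, ?_⟩
    rintro x ⟨β, hβ, hx⟩
    calc ‖x - ∑ i ∈ Finset.range N, lp.single 2 i (x i)‖
        ≤ ‖((1 / Real.sqrt (N + 1) : ℝ) : ℂ) • β‖ := by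
          refine lp.norm_sub_sum_single_le two_ne_zero x _ fun i hi => ?_
          have hNi : (N : ℝ) ≤ i := by simpa using hi
          rw [hx, hcoord, lp.coeFn_smul, Pi.smul_apply, norm_smul, Complex.norm_real,
            Real.norm_of_nonneg (by positivity), one_div_mul_eq_div]
          gcongr
      _ = 1 / Real.sqrt (N + 1) * ‖β‖ := by
          rw [norm_smul, Complex.norm_real, Real.norm_of_nonneg (by positivity)]
      _ ≤ 1 / Real.sqrt (N + 1) := mul_le_of_le_one_right (by positivity) hβ
      _ < ε := hεN
end

section
/- Let A be a Banach space, 1 < p ≤ ∞, 1/p + 1/q = 1. A bounded operator Λ : ℓ^q → A is compact if and only if Λ = Λ_a for some sequence a = (a_i) in A such that the set {(φ(a_i))_i : φ ∈ A*, ‖φ‖ ≤ 1} is totally bounded in ℓ^p, where Λ_a(β) = ∑ β_i a_i. -/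
/-!
Put `aᵢ = Λ eᵢ` and `Γ φ = (φ aᵢ)ᵢ`. As `q < ∞`, the unit vectors span `ℓ^q`, so `Λ β = ∑ βᵢ aᵢ`
and this `a` is the only possible one. The map `f ↦ (f eᵢ)ᵢ` embeds `(ℓ^q)*` isometrically
into `ℓ^p` (Hölder's inequality and its equality case), so `‖Γ φ - Γ ψ‖` is the sup
of `|φ (Λ β) - ψ (Λ β)|` over the unit ball of `ℓ^q`, while by Hahn–Banach `‖Λ β - Λ β'‖` is
the sup of `|φ (Λ β) - φ (Λ β')|` over the unit ball of `A*`. Total boundedness of either side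
transfers to the other through the bounded kernel `(φ, β) ↦ φ (Λ β)`: a finite net on one side
reduces the other to a bounded set in a finite-dimensional space.
-/

open NormedSpace Metric Bornology Set
open scoped ENNReal

theorem Real.rpow_le_of_rpow_le_mul {P Q b C : ℝ} (hPQ : P.HolderConjugate Q) (hb : 0 ≤ b)
    (hC : 0 ≤ C) (h : b ^ Q ≤ C * b) : b ^ Q ≤ C ^ P := by
  rcases hb.eq_or_lt with rfl | hb
  · rw [Real.zero_rpow hPQ.symm.pos.ne']
    positivity
  have hbC : b ^ (Q - 1) ≤ C := by
    rwa [Real.rpow_sub_one hb.ne', div_le_iff₀ hb]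
  calc b ^ Q = (b ^ (Q - 1)) ^ P := by
        rw [← Real.rpow_mul hb.le, hPQ.symm.sub_one_mul_conj]
    _ ≤ C ^ P := by gcongr; exact hPQ.nonneg

namespace lp

variable {α 𝕜 : Type*} [DecidableEq α] [RCLike 𝕜] {p q : ℝ≥0∞}

theorem apply_single_eq_of_hasSum {E : Type*} [AddCommMonoid E] [Module 𝕜 E] [TopologicalSpace E]
    [T2Space E] {T : lp (fun _ : α => 𝕜) q → E} {a : α → E}
    (h : ∀ β, HasSum (fun i => β i • a i) (T β)) (i : α) : T (lp.single q i 1) = a i := by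
  have hi := hasSum_single (f := fun j => (lp.single q i (1 : 𝕜) : lp (fun _ : α => 𝕜) q) j • a j)
    i fun j hj => by simp only [lp.single_apply_ne q i _ hj, zero_smul]
  simp only [lp.single_apply_self, one_smul] at hi
  exact (h _).unique hi

variable [Fact (1 ≤ q)]

theorem sum_norm_apply_single_rpow_le (hpq : p.toReal.HolderConjugate q.toReal)
    (f : StrongDual 𝕜 (lp (fun _ : α => 𝕜) q)) (s : Finset α) :
    ∑ i ∈ s, ‖f (lp.single q i 1)‖ ^ p.toReal ≤ ‖f‖ ^ p.toReal := by
  set P := p.toReal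
  set Q := q.toReal
  set c : α → 𝕜 := fun i => f (lp.single q i 1)
  -- the extremal element of Hölder's inequality: `dᵢ cᵢ = ‖cᵢ‖ ^ P` and `‖dᵢ‖ ^ Q = ‖cᵢ‖ ^ P`
  set d : α → 𝕜 := fun i => starRingEnd 𝕜 (c i) * ((‖c i‖ ^ (P - 2) : ℝ) : 𝕜)
  set β := ∑ i ∈ s, lp.single q i (d i)
  have hdc (i : α) : d i * c i = ((‖c i‖ ^ P : ℝ) : 𝕜) := by
    rw [mul_right_comm, RCLike.conj_mul, ← RCLike.ofReal_pow, ← RCLike.ofReal_mul,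
      ← Real.rpow_natCast, ← Real.rpow_add' (norm_nonneg _) (by simpa using hpq.pos.ne')]
    norm_num
  have hd (i : α) : ‖d i‖ ^ Q = ‖c i‖ ^ P := by
    have hexp : (1 + (P - 2)) * Q = P := by linear_combination hpq.sub_one_mul_conj
    rw [norm_mul, RCLike.norm_conj, RCLike.norm_ofReal, abs_of_nonneg (by positivity),
      ← Real.rpow_one_add' (norm_nonneg _) (by linarith [hpq.lt]), ← Real.rpow_mul (norm_nonneg _),
      hexp]
  have hfβ : f β = ((∑ i ∈ s, ‖c i‖ ^ P : ℝ) : 𝕜) := by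
    simp only [β, map_sum, ← hdc]
    refine Finset.sum_congr rfl fun i _ => ?_
    rw [← smul_eq_mul, ← map_smul, ← lp.single_smul, smul_eq_mul, mul_one]
  have hβ : ‖β‖ ^ Q = ∑ i ∈ s, ‖c i‖ ^ P := by
    rw [lp.norm_sum_single hpq.symm.pos, Finset.sum_congr rfl fun i _ => hd i]
  rw [← hβ]
  refine Real.rpow_le_of_rpow_le_mul hpq (norm_nonneg _) (norm_nonneg _) ?_
  calc ‖β‖ ^ Q = ‖f β‖ := by rw [hfβ, RCLike.norm_ofReal, abs_of_nonneg (by positivity), hβ]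
    _ ≤ ‖f‖ * ‖β‖ := f.le_opNorm β

theorem hasSum_apply_single {E : Type*} [AddCommMonoid E] [Module 𝕜 E] [TopologicalSpace E]
    (hq : q ≠ ∞) (T : lp (fun _ : α => 𝕜) q →L[𝕜] E) (β : lp (fun _ : α => 𝕜) q) :
    HasSum (fun i => β i • T (lp.single q i 1)) (T β) := by
  simpa only [← map_smul, ← lp.single_smul, smul_eq_mul, mul_one] using
    T.hasSum (lp.hasSum_single hq β)

theorem norm_apply_single_le (f : StrongDual 𝕜 (lp (fun _ : α => 𝕜) q)) (i : α) :
    ‖f (lp.single q i 1)‖ ≤ ‖f‖ := by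
  simpa [lp.norm_single (zero_lt_one.trans_le Fact.out)] using f.le_opNorm (lp.single q i 1)

variable [Fact (1 ≤ p)] [p.HolderConjugate q]

theorem memℓp_apply_single (hq : q ≠ ∞) (f : StrongDual 𝕜 (lp (fun _ : α => 𝕜) q)) :
    Memℓp (fun i => f (lp.single q i 1)) p := by
  rcases eq_or_ne p ∞ with rfl | hp
  · exact memℓp_infty ⟨‖f‖, by rintro - ⟨i, rfl⟩; exact norm_apply_single_le f i⟩
  · exact memℓp_gen' <|
      sum_norm_apply_single_rpow_le (ENNReal.HolderConjugate.toReal_of_ne_top hp hq) f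

theorem norm_le_norm_strongDual {f : StrongDual 𝕜 (lp (fun _ : α => 𝕜) q)}
    {x : lp (fun _ : α => 𝕜) p} (hq : q ≠ ∞) (hx : ∀ i, x i = f (lp.single q i 1)) :
    ‖x‖ ≤ ‖f‖ := by
  rcases eq_or_ne p ∞ with rfl | hp
  · exact lp.norm_le_of_forall_le (norm_nonneg f) fun i => hx i ▸ norm_apply_single_le f i
  · have hpq := ENNReal.HolderConjugate.toReal_of_ne_top hp hq
    refine lp.norm_le_of_forall_sum_le hpq.pos (norm_nonneg f) fun s => ?_
    simpa only [hx] using sum_norm_apply_single_rpow_le hpq f s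

theorem norm_strongDual_le_norm {f : StrongDual 𝕜 (lp (fun _ : α => 𝕜) q)}
    {x : lp (fun _ : α => 𝕜) p} (hq : q ≠ ∞) (hx : ∀ i, x i = f (lp.single q i 1)) :
    ‖f‖ ≤ ‖x‖ := by
  have hmul : ∀ _ : α, ‖ContinuousLinearMap.mul 𝕜 𝕜‖ ≤ (1 : NNReal) := fun _ => by simp
  set D := lp.dualPairing p q (fun _ => ContinuousLinearMap.mul 𝕜 𝕜) hmul
  have hf : f = D x := by
    ext β
    rw [lp.dualPairing_apply, ← (hasSum_apply_single hq f β).tsum_eq]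
    simp only [hx, smul_eq_mul, ContinuousLinearMap.mul_apply', mul_comm]
  calc ‖f‖ = ‖D x‖ := by rw [← hf]
    _ ≤ ‖D‖ * ‖x‖ := D.le_opNorm x
    _ ≤ ‖x‖ := mul_le_of_le_one_left (norm_nonneg x) (lp.norm_dualPairing _ hmul)

noncomputable def ofStrongDual (hq : q ≠ ∞) :
    StrongDual 𝕜 (lp (fun _ : α => 𝕜) q) →ₗᵢ[𝕜] lp (fun _ : α => 𝕜) p where
  toFun f := ⟨fun i => f (lp.single q i 1), memℓp_apply_single hq f⟩
  map_add' _ _ := rfl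
  map_smul' _ _ := rfl
  norm_map' _ := le_antisymm (norm_le_norm_strongDual hq fun _ => rfl)
    (norm_strongDual_le_norm hq fun _ => rfl)

end lp

section Transpose

variable {X Y M N Z : Type*} [PseudoMetricSpace M] [PseudoMetricSpace N] [PseudoMetricSpace Z]

theorem TotallyBounded.exists_finite_dist_image_lt {F : X → M} {s : Set X}
    (hF : TotallyBounded (F '' s)) {ε : ℝ} (hε : 0 < ε) :
    ∃ u ⊆ s, u.Finite ∧ ∀ x ∈ s, ∃ x' ∈ u, dist (F x) (F x') < ε := by
  obtain ⟨v, hvs, hvf, hcov⟩ := finite_approx_of_totallyBounded hF ε hε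
  obtain ⟨u, hus, huf, rfl⟩ := exists_subset_image_finite_and.1 ⟨v, hvs, hvf, rfl⟩
  refine ⟨u, hus, huf, fun x hx => ?_⟩
  obtain ⟨-, ⟨x', hx', rfl⟩, hxx'⟩ := mem_iUnion₂.1 (hcov (mem_image_of_mem F hx))
  exact ⟨x', hx', hxx'⟩

theorem TotallyBounded.exists_finite_uniform_net_flip [ProperSpace Z] {F : X → M}
    {K : X → Y → Z} {s : Set X} {t : Set Y} (hF : TotallyBounded (F '' s))
    (hK : IsBounded (image2 K s t))
    (hFK : ∀ x ∈ s, ∀ x' ∈ s, ∀ y ∈ t, dist (K x y) (K x' y) ≤ dist (F x) (F x'))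
    {ε : ℝ} (hε : 0 < ε) :
    ∃ v ⊆ t, v.Finite ∧ ∀ y ∈ t, ∃ y' ∈ v, ∀ x ∈ s, dist (K x y) (K x y') < ε := by
  obtain ⟨u, hus, huf, hu⟩ := hF.exists_finite_dist_image_lt (ε := ε / 3) (by positivity)
  have := huf.fintype
  -- `K · y` is determined up to `2ε/3` by its values on the finite net `u`
  let Φ : Y → u → Z := fun y x => K x y
  have hΦ : TotallyBounded (Φ '' t) := by
    refine ((IsBounded.pi fun _ => hK).isCompact_closure).totallyBounded.subset
      (subset_closure.trans' ?_)
    rintro - ⟨y, hy, rfl⟩ x -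
    exact mem_image2_of_mem (hus x.2) hy
  obtain ⟨v, hvt, hvf, hv⟩ := hΦ.exists_finite_dist_image_lt (ε := ε / 3) (by positivity)
  refine ⟨v, hvt, hvf, fun y hy => ?_⟩
  obtain ⟨y', hy', hyy'⟩ := hv y hy
  refine ⟨y', hy', fun x hx => ?_⟩
  obtain ⟨x', hx', hxx'⟩ := hu x hx
  calc dist (K x y) (K x y')
      ≤ dist (K x y) (K x' y) + dist (K x' y) (K x' y') + dist (K x' y') (K x y') :=
        dist_triangle4 _ _ _ _
    _ < ε / 3 + ε / 3 + ε / 3 := by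
        gcongr
        · exact (hFK x hx x' (hus hx') y hy).trans_lt hxx'
        · exact (dist_le_pi_dist (Φ y) (Φ y') ⟨x', hx'⟩).trans_lt hyy'
        · rw [dist_comm]; exact (hFK x hx x' (hus hx') y' (hvt hy')).trans_lt hxx'
    _ = ε := by ring

theorem TotallyBounded.image_of_flip [ProperSpace Z] {F : X → M} {G : Y → N} (K : X → Y → Z)
    {s : Set X} {t : Set Y} (hF : TotallyBounded (F '' s)) (hK : IsBounded (image2 K s t))
    (hFK : ∀ x ∈ s, ∀ x' ∈ s, ∀ y ∈ t, dist (K x y) (K x' y) ≤ dist (F x) (F x'))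
    (hKG : ∀ y ∈ t, ∀ y' ∈ t, ∀ ε, (∀ x ∈ s, dist (K x y) (K x y') ≤ ε) →
      dist (G y) (G y') ≤ ε) :
    TotallyBounded (G '' t) := by
  refine totallyBounded_iff.2 fun ε hε => ?_
  obtain ⟨v, hvt, hvf, hv⟩ := hF.exists_finite_uniform_net_flip hK hFK (half_pos hε)
  refine ⟨G '' v, hvf.image G, ?_⟩
  rintro - ⟨y, hy, rfl⟩
  obtain ⟨y', hy', hyy'⟩ := hv y hy
  refine mem_biUnion (mem_image_of_mem G hy') (mem_ball.2 ?_)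
  exact (hKG y hy y' (hvt hy') (ε / 2) fun x hx => (hyy' x hx).le).trans_lt (half_lt_self hε)

end Transpose

theorem isCompactOperator_iff_totallyBounded_image_closedBall {𝕜 E F : Type*}
    [NontriviallyNormedField 𝕜] [SeminormedAddCommGroup E] [NormedSpace 𝕜 E]
    [NormedAddCommGroup F] [NormedSpace 𝕜 F] [CompleteSpace F] (T : E →L[𝕜] F) :
    IsCompactOperator T ↔ TotallyBounded (T '' closedBall 0 1) :=
  (isCompactOperator_iff_isCompact_closure_image_closedBall (T : E →ₗ[𝕜] F) one_pos).trans
    ⟨fun h => h.totallyBounded.subset subset_closure,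
      fun h => h.closure.isCompact_of_isClosed isClosed_closure⟩

section CompactOperator

variable {α 𝕜 A : Type*} [DecidableEq α] [RCLike 𝕜] [NormedAddCommGroup A] [NormedSpace 𝕜 A]
  {p q : ℝ≥0∞} [Fact (1 ≤ p)] [Fact (1 ≤ q)] [p.HolderConjugate q]

theorem isCompactOperator_iff_totallyBounded_ofStrongDual_comp [CompleteSpace A]
    (hq : q ≠ ∞) (Λ : lp (fun _ : α => 𝕜) q →L[𝕜] A) :
    IsCompactOperator Λ ↔
      TotallyBounded ((fun φ : StrongDual 𝕜 A => lp.ofStrongDual (p := p) hq (φ.comp Λ)) ''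
        closedBall 0 1) := by
  have hdist (φ ψ : StrongDual 𝕜 A) :
      dist (lp.ofStrongDual (p := p) hq (φ.comp Λ)) (lp.ofStrongDual hq (ψ.comp Λ)) =
        ‖(φ - ψ).comp Λ‖ := by
    rw [LinearIsometry.dist_map, dist_eq_norm, ContinuousLinearMap.sub_comp]
  have hbound {φ : StrongDual 𝕜 A} {β : lp (fun _ : α => 𝕜) q} (hφ : ‖φ‖ ≤ 1) (hβ : ‖β‖ ≤ 1) :
      ‖φ (Λ β)‖ ≤ ‖Λ‖ := by
    calc ‖φ (Λ β)‖ ≤ ‖φ‖ * (‖Λ‖ * ‖β‖) := φ.le_opNorm_of_le (Λ.le_opNorm β)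
      _ ≤ 1 * (‖Λ‖ * 1) := by gcongr
      _ = ‖Λ‖ := by ring
  have hK : IsBounded
      (image2 (fun φ β => φ (Λ β)) (closedBall (0 : StrongDual 𝕜 A) 1) (closedBall 0 1)) :=
    (isBounded_closedBall (x := (0 : 𝕜)) (r := ‖Λ‖)).subset <| image2_subset_iff.2
      fun φ hφ β hβ => mem_closedBall_zero_iff.2 <|
        hbound (mem_closedBall_zero_iff.1 hφ) (mem_closedBall_zero_iff.1 hβ)
  rw [isCompactOperator_iff_totallyBounded_image_closedBall]
  constructor
  · intro h
    refine h.image_of_flip (fun β φ => φ (Λ β)) (image2_swap _ _ _ ▸ hK) ?_ ?_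
    · intro β _ β' _ φ hφ
      exact (φ.dist_le_opNorm _ _).trans
        (mul_le_of_le_one_left dist_nonneg (mem_closedBall_zero_iff.1 hφ))
    · intro φ _ ψ _ ε hε
      rw [hdist]
      refine ContinuousLinearMap.opNorm_le_of_unit_norm
        (dist_nonneg.trans (hε 0 (mem_closedBall_self zero_le_one))) fun β hβ => ?_
      simpa [dist_eq_norm] using hε β (mem_closedBall_zero_iff.2 hβ.le)
  · intro h
    refine h.image_of_flip (fun φ β => φ (Λ β)) hK ?_ ?_
    · intro φ _ ψ _ β hβ
      rw [hdist, dist_eq_norm]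
      exact ((φ - ψ).comp Λ).le_opNorm_of_le (mem_closedBall_zero_iff.1 hβ) |>.trans_eq
        (mul_one _)
    · intro β _ β' _ ε hε
      obtain ⟨g, hg, hgx⟩ := exists_dual_vector'' 𝕜 (Λ β - Λ β')
      calc dist (Λ β) (Λ β') = ‖g (Λ β - Λ β')‖ := by
            rw [hgx, RCLike.norm_ofReal, abs_norm, dist_eq_norm]
        _ = dist (g (Λ β)) (g (Λ β')) := by rw [map_sub, dist_eq_norm]
        _ ≤ ε := hε g (mem_closedBall_zero_iff.2 hg)

end CompactOperator

/-- Characterization of compact operators `Λ : ℓ^q → A` (`1 < p ≤ ∞`, `1/p + 1/q = 1`):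
`Λ` is compact iff `Λ = Λ_a` for a sequence `a` whose dual shadow is totally bounded
in `ℓ^p`. -/
theorem isCompactOperator_iff_diagonal_totallyBounded_shadow {A : Type*}
    [NormedAddCommGroup A] [NormedSpace ℂ A] [CompleteSpace A]
    (p q : ℝ≥0∞) (hp : 1 < p) [Fact (1 ≤ p)] [Fact (1 ≤ q)] (hpq : p⁻¹ + q⁻¹ = 1)
    (Λ : lp (fun _ : ℕ => ℂ) q →L[ℂ] A) :
    IsCompactOperator ⇑Λ ↔
      ∃ a : ℕ → A,
        TotallyBounded
          {x : lp (fun _ : ℕ => ℂ) p | ∃ φ : StrongDual ℂ A, ‖φ‖ ≤ 1 ∧ ∀ i, x i = φ (a i)} ∧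
        ∀ β : lp (fun _ : ℕ => ℂ) q, HasSum (fun i => β i • a i) (Λ β) := by
  have : p.HolderConjugate q := ENNReal.holderConjugate_iff.2 hpq
  have hq : q ≠ ∞ := (ENNReal.HolderConjugate.ne_top_iff_ne_one q p).2 hp.ne'
  have hshadow : {x : lp (fun _ : ℕ => ℂ) p | ∃ φ : StrongDual ℂ A, ‖φ‖ ≤ 1 ∧
      ∀ i, x i = φ (Λ (lp.single q i 1))} =
      (fun φ : StrongDual ℂ A => lp.ofStrongDual hq (φ.comp Λ)) '' closedBall 0 1 := by
    ext x
    simp only [mem_ofPred_eq, mem_image, mem_closedBall_zero_iff]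
    refine exists_congr fun φ => and_congr_right fun _ =>
      ⟨fun h => lp.ext (funext fun i => (h i).symm), fun h i => by rw [← h]; rfl⟩
  rw [isCompactOperator_iff_totallyBounded_ofStrongDual_comp (p := p) hq, ← hshadow]
  constructor
  · exact fun h => ⟨_, h, lp.hasSum_apply_single hq Λ⟩
  · rintro ⟨a, ha, hsum⟩
    obtain rfl : a = fun i => Λ (lp.single q i 1) :=
      funext fun i => (lp.apply_single_eq_of_hasSum hsum i).symm
    exact ha
end

section
/- Let A be a Banach space and a = (a_i) a bounded sequence in A. The set {(φ(a_i))_i : φ ∈ A*, ‖φ‖ ≤ 1} is totally bounded in ℓ^∞ if and only if the set {a_1, a_2, …} is totally bounded in A. -/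
/-!
Write `B` for the closed unit ball of `A*` and consider the bounded kernel `(φ, i) ↦ φ (aᵢ)` on
`B × ℕ`. The shadow is the family of its rows `i ↦ φ (aᵢ)` with the uniform distance, and by
Hahn–Banach `‖aᵢ - aⱼ‖ = sup_{φ ∈ B} |φ (aᵢ) - φ (aⱼ)|`, so `range a` is the family of its
columns with the uniform distance. For any bounded kernel with values in a proper space the rows
are uniformly totally bounded iff the columns are: along a finite `ε`-net of columns, the rows
become points of a bounded, hence totally bounded, subset of a finite product, and an `ε`-net
of those restricted rows is a `3ε`-net of the rows themselves.
-/

open NormedSpace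
open scoped ENNReal

open Set Function Metric

section UniformTotalBoundedness

variable {ι κ X E : Type*} [PseudoMetricSpace X] [PseudoMetricSpace E]

def IsUniformlyTotallyBounded (e : ι → κ → E) : Prop :=
  ∀ ε > 0, ∃ T : Set ι, T.Finite ∧ ∀ i, ∃ j ∈ T, ∀ k, dist (e i k) (e j k) ≤ ε

theorem totallyBounded_range_iff {f : ι → X} :
    TotallyBounded (range f) ↔
      ∀ ε > 0, ∃ T : Set ι, T.Finite ∧ ∀ i, ∃ j ∈ T, dist (f i) (f j) ≤ ε := by
  constructor
  · intro hf ε hε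
    obtain ⟨t, htf, htε, hcover⟩ := finite_approx_of_totallyBounded hf ε hε
    rw [← image_univ] at htf
    obtain ⟨T, -, hT, rfl⟩ := exists_subset_image_finite_and.1 ⟨t, htf, htε, rfl⟩
    refine ⟨T, hT, fun i => ?_⟩
    obtain ⟨_, ⟨j, hj, rfl⟩, hij⟩ := mem_iUnion₂.1 (hcover (mem_range_self i))
    exact ⟨j, hj, (mem_ball.1 hij).le⟩
  · intro h
    refine totallyBounded_iff.2 fun ε hε => ?_
    obtain ⟨T, hT, hnet⟩ := h (ε / 2) (half_pos hε)
    refine ⟨f '' T, hT.image f, ?_⟩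
    rintro _ ⟨i, rfl⟩
    obtain ⟨j, hj, hij⟩ := hnet i
    exact mem_iUnion₂.2 ⟨f j, mem_image_of_mem f hj, mem_ball.2 (hij.trans_lt (half_lt_self hε))⟩

theorem totallyBounded_range_iff_isUniformlyTotallyBounded {f : ι → X} {e : ι → κ → E}
    (hfe : ∀ i j r, 0 ≤ r → (dist (f i) (f j) ≤ r ↔ ∀ k, dist (e i k) (e j k) ≤ r)) :
    TotallyBounded (range f) ↔ IsUniformlyTotallyBounded e := by
  rw [totallyBounded_range_iff]
  refine forall₂_congr fun ε hε => exists_congr fun T => and_congr_right fun _ =>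
    forall_congr' fun i => exists_congr fun j => and_congr_right fun _ => hfe i j ε hε.le

theorem IsUniformlyTotallyBounded.of_flip [ProperSpace E] {e : ι → κ → E}
    (hb : Bornology.IsBounded (range (uncurry e))) (h : IsUniformlyTotallyBounded (flip e)) :
    IsUniformlyTotallyBounded e := by
  intro ε hε
  obtain ⟨K, hK, hKnet⟩ := h (ε / 3) (by positivity)
  have := hK.fintype
  let restrict : ι → K → E := fun i k => e i k
  have hrestrict : TotallyBounded (range restrict) := by
    have : Bornology.IsBounded (range restrict) :=
      (Bornology.IsBounded.pi fun _ => hb).subset <| by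
        rintro _ ⟨i, rfl⟩ k -
        exact ⟨(i, k), rfl⟩
    exact this.isCompact_closure.totallyBounded.subset subset_closure
  obtain ⟨T, hT, hTnet⟩ := totallyBounded_range_iff.1 hrestrict (ε / 3) (by positivity)
  refine ⟨T, hT, fun i => ?_⟩
  obtain ⟨j, hj, hij⟩ := hTnet i
  refine ⟨j, hj, fun k => ?_⟩
  obtain ⟨k₀, hk₀, hkk₀⟩ := hKnet k
  have hij₀ : dist (e i k₀) (e j k₀) ≤ ε / 3 :=
    (dist_le_pi_dist (restrict i) (restrict j) ⟨k₀, hk₀⟩).trans hij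
  calc dist (e i k) (e j k)
      ≤ dist (e i k) (e i k₀) + dist (e i k₀) (e j k₀) + dist (e j k₀) (e j k) :=
        dist_triangle4 _ _ _ _
    _ ≤ ε / 3 + ε / 3 + ε / 3 := by
        gcongr
        · exact hkk₀ i
        · exact dist_comm (e j k) _ ▸ hkk₀ j
    _ = ε := by ring

theorem isUniformlyTotallyBounded_flip_iff [ProperSpace E] {e : ι → κ → E}
    (hb : Bornology.IsBounded (range (uncurry e))) :
    IsUniformlyTotallyBounded (flip e) ↔ IsUniformlyTotallyBounded e := by
  refine ⟨IsUniformlyTotallyBounded.of_flip hb, IsUniformlyTotallyBounded.of_flip ?_⟩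
  show Bornology.IsBounded (range (uncurry (flip e)))
  rwa [uncurry_flip, range_comp, Prod.swap_surjective.range_eq, image_univ]

end UniformTotalBoundedness

theorem dist_le_iff_forall_dual {𝕜 E : Type*} [RCLike 𝕜] [NormedAddCommGroup E]
    [NormedSpace 𝕜 E] {x y : E} {r : ℝ} :
    dist x y ≤ r ↔ ∀ φ : StrongDual 𝕜 E, ‖φ‖ ≤ 1 → dist (φ x) (φ y) ≤ r := by
  refine ⟨fun h φ hφ => ?_, fun h => ?_⟩
  · rw [dist_eq_norm] at h ⊢
    rw [← map_sub]
    exact (φ.le_opNorm _).trans ((mul_le_of_le_one_left (norm_nonneg _) hφ).trans h)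
  · obtain ⟨φ, hφ, hφxy⟩ := exists_dual_vector'' 𝕜 (x - y)
    simpa [dist_eq_norm, ← map_sub, hφxy] using h φ hφ

theorem lp.dist_le_iff {α : Type*} {E : α → Type*} [∀ i, NormedAddCommGroup (E i)]
    {x y : lp E ∞} {r : ℝ} (hr : 0 ≤ r) : dist x y ≤ r ↔ ∀ i, dist (x i) (y i) ≤ r := by
  simp only [dist_eq_norm]
  refine ⟨fun h i => ?_, fun h => lp.norm_le_of_forall_le hr fun i => ?_⟩
  · exact (lp.norm_apply_le_norm ENNReal.top_ne_zero (x - y) i).trans h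
  · simpa using h i

theorem totallyBounded_shadow_infty_iff_general {A : Type*}
    [NormedAddCommGroup A] [NormedSpace ℂ A]
    (a : ℕ → A) (hbdd : ∃ C : ℝ, ∀ i, ‖a i‖ ≤ C) :
    TotallyBounded
      {x : lp (fun _ : ℕ => ℂ) ∞ | ∃ φ : StrongDual ℂ A, ‖φ‖ ≤ 1 ∧ ∀ i, x i = φ (a i)} ↔
    TotallyBounded (Set.range a) := by
  set S := {x : lp (fun _ : ℕ => ℂ) ∞ | ∃ φ : StrongDual ℂ A, ‖φ‖ ≤ 1 ∧ ∀ i, x i = φ (a i)}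
  obtain ⟨C, hC⟩ := hbdd
  let e : S → ℕ → ℂ := fun x i => (x : lp (fun _ : ℕ => ℂ) ∞) i
  have hshadow (φ : StrongDual ℂ A) : Memℓp (fun i => φ (a i)) ∞ :=
    memℓp_infty ⟨‖φ‖ * C, by rintro _ ⟨i, rfl⟩; exact φ.le_opNorm_of_le (hC i)⟩
  have hS : TotallyBounded S ↔ IsUniformlyTotallyBounded e := by
    conv_lhs => rw [← Subtype.range_coe (s := S)]
    exact totallyBounded_range_iff_isUniformlyTotallyBounded fun x y r hr => lp.dist_le_iff hr
  have ha : TotallyBounded (range a) ↔ IsUniformlyTotallyBounded (flip e) := by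
    refine totallyBounded_range_iff_isUniformlyTotallyBounded fun i j r _ =>
      dist_le_iff_forall_dual.trans ⟨fun h x => ?_,
        fun h φ hφ => h ⟨⟨_, hshadow φ⟩, φ, hφ, fun _ => rfl⟩⟩
    obtain ⟨φ, hφ, hx⟩ := x.2
    simpa only [flip, e, hx] using h φ hφ
  have hb : Bornology.IsBounded (range (uncurry e)) := by
    refine isBounded_iff_forall_norm_le.2 ⟨C, ?_⟩
    rintro _ ⟨⟨⟨x, φ, hφ, hx⟩, i⟩, rfl⟩
    simp only [uncurry_apply_pair, e, hx]
    exact (φ.le_of_opNorm_le hφ (a i)).trans (by simpa using hC i)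
  rw [hS, ha, isUniformlyTotallyBounded_flip_iff hb]

/-- For a bounded sequence `a` in `A`, the dual shadow `{(φ(aᵢ))ᵢ : ‖φ‖ ≤ 1}` is
totally bounded in `ℓ^∞` iff the set `{a₁, a₂, …}` is totally bounded in `A`. -/
theorem totallyBounded_shadow_infty_iff {A : Type*}
    [NormedAddCommGroup A] [NormedSpace ℂ A] [CompleteSpace A]
    (a : ℕ → A) (hbdd : ∃ C : ℝ, ∀ i, ‖a i‖ ≤ C) :
    TotallyBounded
      {x : lp (fun _ : ℕ => ℂ) ∞ | ∃ φ : StrongDual ℂ A, ‖φ‖ ≤ 1 ∧ ∀ i, x i = φ (a i)} ↔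
    TotallyBounded (Set.range a) :=
  totallyBounded_shadow_infty_iff_general a hbdd
end

section
/- Let Ω be a compact Hausdorff space and F : Ω → ℓ^p (1 ≤ p ≤ ∞) a function whose component functions f_i : Ω → ℂ are all continuous. Then F is continuous if and only if the image F(Ω) is totally bounded in ℓ^p. -/
open scoped ENNReal

open Set Topology

/-! Since `ℓ^p` is complete, a totally bounded range has compact closure, and on a compact set
the norm topology of `ℓ^p` agrees with the (coarser, Hausdorff) topology of coordinatewise
convergence, in which `F` is continuous by assumption. -/

/-- `g` restricts to a closed embedding of the compact set `K`, since `Z` is Hausdorff. -/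
theorem IsCompact.continuous_of_continuous_comp {X Y Z : Type*} [TopologicalSpace X]
    [TopologicalSpace Y] [TopologicalSpace Z] [T2Space Z] {K : Set Y} (hK : IsCompact K)
    {g : Y → Z} (hg : ContinuousOn g K) (hinj : InjOn g K) {F : X → Y} (hFK : ∀ x, F x ∈ K)
    (hgF : Continuous (g ∘ F)) : Continuous F := by
  have : CompactSpace K := isCompact_iff_compactSpace.mp hK
  have hemb : IsEmbedding (K.domRestrict g) :=
    (hg.domRestrict.isClosedEmbedding hinj.injective).isEmbedding
  have hFK_cont : Continuous fun x => (⟨F x, hFK x⟩ : K) := hemb.continuous_iff.mpr hgF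
  exact continuous_subtype_val.comp hFK_cont

theorem continuous_iff_image_totallyBounded_general {Ω : Type*} [TopologicalSpace Ω]
    [CompactSpace Ω] (p : ℝ≥0∞) [Fact (1 ≤ p)]
    (f : ℕ → Ω → ℂ) (hf : ∀ i, Continuous (f i))
    (F : Ω → lp (fun _ : ℕ => ℂ) p) (hF : ∀ (s : Ω) (i : ℕ), F s i = f i s) :
    Continuous F ↔ TotallyBounded (Set.range F) := by
  refine ⟨fun hFc => (isCompact_range hFc).totallyBounded, fun htb => ?_⟩
  have hK : IsCompact (closure (range F)) := htb.closure.isCompact_of_isClosed isClosed_closure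
  have hcoe : Continuous fun x : lp (fun _ : ℕ => ℂ) p => (x : ℕ → ℂ) :=
    lp.uniformContinuous_coe.continuous
  have hcoords : Continuous fun s i => F s i :=
    continuous_pi fun i => by simpa only [hF] using hf i
  exact hK.continuous_of_continuous_comp hcoe.continuousOn (fun a _ b _ h => lp.ext h)
    (fun s => subset_closure (mem_range_self s)) hcoords

/-- A function `F : Ω → ℓ^p` on a compact Hausdorff space with continuous component
functions is continuous iff its image is totally bounded in `ℓ^p`. -/
theorem continuous_iff_image_totallyBounded {Ω : Type*} [TopologicalSpace Ω]
    [CompactSpace Ω] [T2Space Ω] (p : ℝ≥0∞) [Fact (1 ≤ p)]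
    (f : ℕ → Ω → ℂ) (hf : ∀ i, Continuous (f i))
    (F : Ω → lp (fun _ : ℕ => ℂ) p) (hF : ∀ (s : Ω) (i : ℕ), F s i = f i s) :
    Continuous F ↔ TotallyBounded (Set.range F) :=
  continuous_iff_image_totallyBounded_general p f hf F hF
end
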